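/- Let n ≥ 1, p > 1, r > 0, and let w be a weight on ℂⁿ belonging to A_{p,3r}. Then there exists a constant C ≥ 1, independent of ν and ν', such that for all lattice points ν, ν' ∈ rℤ^{2n}, w(Q_r(ν)) ≤ C^{|ν - ν'|} · w(Q_r(ν')), where |ν - ν'| is the Euclidean distance. -/

import Mathlib

open MeasureTheory ENNReal Metric

noncomputable section

/-- We identify `ℂⁿ` with `ℝ^{2n}` equipped with Lebesgue measure. -/
abbrev En (n : ℕ) := EuclideanSpace ℂ (Fin n)

instance (n : ℕ) : MeasurableSpace (En n) := borel _
instance (n : ℕ) : BorelSpace (En n) := ⟨rfl⟩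
instance (n : ℕ) : InnerProductSpace ℝ (En n) := InnerProductSpace.complexToReal

/-- The axis-parallel cube with center `z` and side length `r`. -/
def cube (n : ℕ) (r : ℝ) (z : En n) : Set (En n) :=
  {u | ∀ j, |(u j).re - (z j).re| ≤ r / 2 ∧ |(u j).im - (z j).im| ≤ r / 2}

/-- A weight on `ℂⁿ`: measurable, positive a.e. and locally integrable. -/
def IsWeight (n : ℕ) (w : En n → ℝ) : Prop :=
  Measurable w ∧ (∀ᵐ z : En n, 0 < w z) ∧ LocallyIntegrable w volume

/-- The restricted Muckenhoupt condition `A_{p,r}`. -/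
def MemApr (n : ℕ) (p r : ℝ) (w : En n → ℝ) : Prop :=
  ∃ C : ℝ, ∀ z : En n,
    ((volume (cube n r z))⁻¹ * ∫⁻ u in cube n r z, ENNReal.ofReal (w u)) *
      ((volume (cube n r z))⁻¹ *
        ∫⁻ u in cube n r z, ENNReal.ofReal (w u ^ (-(1 / (p - 1))))) ^ (p - 1)
      ≤ ENNReal.ofReal C

/-- `ν` is a point of the lattice `rℤ^{2n} ⊆ ℂⁿ`. -/
def IsLatticePoint (n : ℕ) (r : ℝ) (ν : En n) : Prop :=
  ∀ j, ∃ a b : ℤ, ν j = (r * a : ℝ) + (r * b : ℝ) * Complex.I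

/-! Hölder's inequality gives `|Q|^p ≤ w(Q) σ(Q)^(p-1)` for `σ = w^(-1/(p-1))`; applied on
`Q_r(z) ⊆ Q_{3r}(z)` and combined with the `A_{p,3r}` bound on `Q_{3r}(z)` it yields the doubling
estimate `w(Q_{3r}(z)) ≤ D w(Q_r(z))` uniformly in `z`. As `Q_r(z) ⊆ Q_{3r}(z')` whenever
`|z - z'| ≤ r`, walking along the segment from `ν'` to `ν` in `⌈|ν - ν'| / r⌉` steps gives the
factor `D^⌈|ν - ν'| / r⌉`. Distinct lattice points are at distance at least `r`, so this exponent is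
at most `2 |ν - ν'| / r`, and `C = D^(2/r)` works. -/

theorem MeasureTheory.measure_univ_rpow_le_lintegral_mul_lintegral_rpow {α : Type*}
    [MeasurableSpace α] (μ : Measure α) {p : ℝ} (hp : 1 < p) {f : α → ℝ}
    (hf : AEMeasurable f μ) (hf_pos : ∀ᵐ x ∂μ, 0 < f x) :
    μ Set.univ ^ p ≤ (∫⁻ x, ENNReal.ofReal (f x) ∂μ) *
      (∫⁻ x, ENNReal.ofReal (f x ^ (-(1 / (p - 1)))) ∂μ) ^ (p - 1) := by
  have hp0 : 0 < p := by linarith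
  have hpq := Real.HolderConjugate.conjExponent hp
  set q := Real.conjExponent p
  have hg : AEMeasurable (fun x => ENNReal.ofReal (f x)) μ := hf.ennreal_ofReal
  have holder := ENNReal.lintegral_mul_le_Lp_mul_Lq μ hpq (hg.pow_const (1 / p))
    (hg.pow_const (-(1 / p)))
  have h_one : ∫⁻ x, ((fun x => ENNReal.ofReal (f x) ^ (1 / p)) *
      fun x => ENNReal.ofReal (f x) ^ (-(1 / p))) x ∂μ = μ Set.univ := by
    rw [← lintegral_one]
    refine lintegral_congr_ae (hf_pos.mono fun x hx => ?_)
    rw [Pi.mul_apply, ← ENNReal.rpow_add _ _ (by simpa using hx) ENNReal.ofReal_ne_top]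
    simp
  have h_left : ∫⁻ x, (ENNReal.ofReal (f x) ^ (1 / p)) ^ p ∂μ = ∫⁻ x, ENNReal.ofReal (f x) ∂μ := by
    simp_rw [← ENNReal.rpow_mul, one_div_mul_cancel hp0.ne', ENNReal.rpow_one]
  have h_right : ∫⁻ x, (ENNReal.ofReal (f x) ^ (-(1 / p))) ^ q ∂μ =
      ∫⁻ x, ENNReal.ofReal (f x ^ (-(1 / (p - 1)))) ∂μ := by
    refine lintegral_congr_ae (hf_pos.mono fun x hx => ?_)
    dsimp only
    rw [← ENNReal.rpow_mul, ENNReal.ofReal_rpow_of_pos hx]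
    congr 1
    simp only [q, Real.conjExponent]
    field_simp
  rw [h_one, h_left, h_right] at holder
  calc μ Set.univ ^ p
      ≤ ((∫⁻ x, ENNReal.ofReal (f x) ∂μ) ^ (1 / p) *
          (∫⁻ x, ENNReal.ofReal (f x ^ (-(1 / (p - 1)))) ∂μ) ^ (1 / q)) ^ p :=
        ENNReal.rpow_le_rpow holder hp0.le
    _ = _ := by
        rw [ENNReal.mul_rpow_of_nonneg _ _ hp0.le, ← ENNReal.rpow_mul, ← ENNReal.rpow_mul,
          one_div_mul_cancel hp0.ne', ENNReal.rpow_one]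
        congr 2
        simp only [q, Real.conjExponent]
        field_simp

section Cube

variable {n : ℕ}

lemma cube_eq_preimage_pi (s : ℝ) (z : En n) :
    cube n s z = WithLp.ofLp ⁻¹'
      Set.univ.pi fun j => closedBall (z j).re (s / 2) ×ℂ closedBall (z j).im (s / 2) := by
  ext u
  simp [cube, Complex.mem_reProdIm, Real.dist_eq]

lemma isCompact_cube (s : ℝ) (z : En n) : IsCompact (cube n s z) := by
  rw [cube_eq_preimage_pi]
  exact (PiLp.homeomorph 2 _).isCompact_preimage.2
    (isCompact_univ_pi fun j => (isCompact_closedBall _ _).reProdIm (isCompact_closedBall _ _))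

lemma ball_subset_cube (s : ℝ) (z : En n) : ball z (s / 2) ⊆ cube n s z := by
  intro u hu j
  have h : ‖u j - z j‖ < s / 2 :=
    (PiLp.norm_apply_le (u - z) j).trans_lt (mem_ball_iff_norm.1 hu)
  exact ⟨by simpa using (Complex.abs_re_le_norm _).trans h.le,
    by simpa using (Complex.abs_im_le_norm _).trans h.le⟩

lemma volume_cube_pos {s : ℝ} (hs : 0 < s) (z : En n) : 0 < volume (cube n s z) :=
  (measure_ball_pos volume z (half_pos hs)).trans_le (measure_mono (ball_subset_cube s z))

lemma volume_cube_eq (s : ℝ) (z : En n) : volume (cube n s z) = volume (cube n s 0) := by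
  have h : cube n s z = (fun u => u + -z) ⁻¹' cube n s 0 := by
    ext u
    simp [cube, sub_eq_add_neg]
  rw [h, measure_preimage_add_right]

lemma cube_subset_cube_three_mul {r : ℝ} {z z' : En n} (h : ‖z - z'‖ ≤ r) :
    cube n r z ⊆ cube n (3 * r) z' := by
  intro u hu j
  have hj : ‖z j - z' j‖ ≤ r := (PiLp.norm_apply_le (z - z') j).trans h
  have hre := (Complex.abs_re_le_norm (z j - z' j)).trans hj
  have him := (Complex.abs_im_le_norm (z j - z' j)).trans hj
  rw [Complex.sub_re] at hre
  rw [Complex.sub_im] at him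
  constructor
  · linarith [abs_sub_le (u j).re (z j).re (z' j).re, (hu j).1]
  · linarith [abs_sub_le (u j).im (z j).im (z' j).im, (hu j).2]

end Cube

section Weight

variable {n : ℕ} {p : ℝ} {w : En n → ℝ}

lemma volume_cube_rpow_le (hp : 1 < p) (hw : Measurable w) (hw_pos : ∀ᵐ u, 0 < w u)
    (s : ℝ) (z : En n) :
    volume (cube n s z) ^ p ≤ (∫⁻ u in cube n s z, ENNReal.ofReal (w u)) *
      (∫⁻ u in cube n s z, ENNReal.ofReal (w u ^ (-(1 / (p - 1))))) ^ (p - 1) := by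
  simpa only [Measure.restrict_apply_univ] using
    measure_univ_rpow_le_lintegral_mul_lintegral_rpow _ hp hw.aemeasurable
      (ae_restrict_of_ae hw_pos)

lemma MemApr.lintegral_mul_le {s : ℝ} (hApr : MemApr n p s w) (hp : 1 < p) (hs : 0 < s) :
    ∃ C : ℝ, ∀ z : En n, (∫⁻ u in cube n s z, ENNReal.ofReal (w u)) *
      (∫⁻ u in cube n s z, ENNReal.ofReal (w u ^ (-(1 / (p - 1))))) ^ (p - 1) ≤
        ENNReal.ofReal C * volume (cube n s 0) ^ p := by
  obtain ⟨C, hC⟩ := hApr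
  refine ⟨C, fun z => ?_⟩
  have hV0 : volume (cube n s z) ≠ 0 := (volume_cube_pos hs z).ne'
  have hVtop : volume (cube n s z) ≠ ⊤ := (isCompact_cube s z).measure_lt_top.ne
  have hVp : volume (cube n s z) ^ p = volume (cube n s z) * volume (cube n s z) ^ (p - 1) := by
    simpa using ENNReal.rpow_add 1 (p - 1) hV0 hVtop
  have h := hC z
  rw [ENNReal.mul_rpow_of_nonneg _ _ (by linarith : 0 ≤ p - 1), ENNReal.inv_rpow,
    mul_mul_mul_comm, ← ENNReal.mul_inv (.inl hV0) (.inl hVtop), ← hVp,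
    ENNReal.inv_mul_le_iff (ENNReal.rpow_pos_of_nonneg (pos_iff_ne_zero.2 hV0) (by linarith)).ne'
      (ENNReal.rpow_ne_top_of_nonneg (by linarith) hVtop)] at h
  rwa [volume_cube_eq, mul_comm (volume _ ^ p)] at h

lemma MemApr.exists_lintegral_cube_three_mul_le {r : ℝ} (hApr : MemApr n p (3 * r) w)
    (hp : 1 < p) (hr : 0 < r) (hw : Measurable w) (hw_pos : ∀ᵐ u, 0 < w u) :
    ∃ D : ℝ, 1 ≤ D ∧ ∀ z : En n, ∫⁻ u in cube n (3 * r) z, ENNReal.ofReal (w u) ≤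
      ENNReal.ofReal D * ∫⁻ u in cube n r z, ENNReal.ofReal (w u) := by
  obtain ⟨C, hC⟩ := hApr.lintegral_mul_le hp (by linarith)
  set K := ENNReal.ofReal C * volume (cube n (3 * r) 0) ^ p / volume (cube n r 0) ^ p
  have hV0 : volume (cube n r 0) ^ p ≠ 0 :=
    (ENNReal.rpow_pos_of_nonneg (volume_cube_pos hr 0) (by linarith)).ne'
  have hVtop : volume (cube n r 0) ^ p ≠ ⊤ :=
    ENNReal.rpow_ne_top_of_nonneg (by linarith) (isCompact_cube r 0).measure_lt_top.ne
  have hK : K ≠ ⊤ := ENNReal.div_ne_top (ENNReal.mul_ne_top ENNReal.ofReal_ne_top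
    (ENNReal.rpow_ne_top_of_nonneg (by linarith) (isCompact_cube _ 0).measure_lt_top.ne)) hV0
  refine ⟨max K.toReal 1, le_max_right _ _, fun z => ?_⟩
  set A := ∫⁻ u in cube n (3 * r) z, ENNReal.ofReal (w u)
  set B := ∫⁻ u in cube n r z, ENNReal.ofReal (w u)
  set S := ∫⁻ u in cube n (3 * r) z, ENNReal.ofReal (w u ^ (-(1 / (p - 1))))
  have hσ : ∫⁻ u in cube n r z, ENNReal.ofReal (w u ^ (-(1 / (p - 1)))) ≤ S :=
    lintegral_mono_set (cube_subset_cube_three_mul (by simpa using hr.le))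
  have hAB : A * volume (cube n r 0) ^ p ≤ B * (ENNReal.ofReal C * volume (cube n (3 * r) 0) ^ p) :=
    calc A * volume (cube n r 0) ^ p ≤ A * (B * S ^ (p - 1)) := by
          rw [← volume_cube_eq r z]
          exact mul_le_mul_right ((volume_cube_rpow_le hp hw hw_pos r z).trans
            (mul_le_mul_right (ENNReal.rpow_le_rpow hσ (by linarith)) B)) A
      _ = B * (A * S ^ (p - 1)) := by ring
      _ ≤ B * (ENNReal.ofReal C * volume (cube n (3 * r) 0) ^ p) := mul_le_mul_right (hC z) B
  calc A ≤ B * (ENNReal.ofReal C * volume (cube n (3 * r) 0) ^ p) / volume (cube n r 0) ^ p :=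
        (ENNReal.le_div_iff_mul_le (.inl hV0) (.inl hVtop)).2 hAB
    _ = K * B := by rw [mul_comm, ENNReal.mul_div_right_comm]
    _ ≤ ENNReal.ofReal (max K.toReal 1) * B := by
        gcongr
        exact (ENNReal.le_ofReal_iff_toReal_le hK (by positivity)).2 (le_max_left _ _)

end Weight

lemma le_pow_mul_of_forall_dist_le {E : Type*} [NormedAddCommGroup E] [NormedSpace ℝ E]
    {F : E → ℝ≥0∞} {D : ℝ≥0∞} {r : ℝ} (hF : ∀ z z', dist z z' ≤ r → F z ≤ D * F z') :
    ∀ (m : ℕ) {z z' : E}, dist z z' ≤ m * r → F z ≤ D ^ m * F z'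
  | 0, z, z', h => by simp [dist_le_zero.1 (by simpa using h)]
  | m + 1, z, z', h => by
    set y := AffineMap.lineMap z' z ((m : ℝ) / (m + 1))
    have hm : (0 : ℝ) < m + 1 := by positivity
    have hzy : dist z y ≤ r := by
      rw [dist_comm, dist_lineMap_right, dist_comm, Real.norm_eq_abs,
        show (1 : ℝ) - m / (m + 1) = 1 / (m + 1) by field_simp; ring,
        abs_of_pos (by positivity), one_div_mul_eq_div, div_le_iff₀ hm]
      push_cast at h
      linarith
    have hyz' : dist y z' ≤ m * r := by
      rw [dist_lineMap_left, dist_comm, Real.norm_eq_abs, abs_of_nonneg (by positivity),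
        div_mul_eq_mul_div, div_le_iff₀ hm]
      push_cast at h
      nlinarith [Nat.cast_nonneg (α := ℝ) m]
    calc F z ≤ D * F y := hF z y hzy
      _ ≤ D * (D ^ m * F z') := mul_le_mul_right (le_pow_mul_of_forall_dist_le hF m hyz') D
      _ = D ^ (m + 1) * F z' := by rw [pow_succ']; ring

lemma IsLatticePoint.le_norm_sub {n : ℕ} {r : ℝ} (hr : 0 ≤ r) {ν ν' : En n}
    (hν : IsLatticePoint n r ν) (hν' : IsLatticePoint n r ν') (hne : ν ≠ ν') :
    r ≤ ‖ν - ν'‖ := by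
  obtain ⟨j, hj⟩ : ∃ j, ν j ≠ ν' j := by
    by_contra! h
    exact hne (PiLp.ext h)
  obtain ⟨a, b, hab⟩ := hν j
  obtain ⟨a', b', hab'⟩ := hν' j
  have hcoord : r ≤ ‖ν j - ν' j‖ := by
    rw [hab, hab'] at hj ⊢
    have one_le_abs_cast {k k' : ℤ} (h : k ≠ k') : (1 : ℝ) ≤ |(k : ℝ) - k'| := by
      exact_mod_cast Int.one_le_abs (sub_ne_zero.2 h)
    by_cases ha : a = a'
    · have hb : b ≠ b' := by rintro rfl; exact hj (by rw [ha])
      refine le_trans ?_ (Complex.abs_im_le_norm _)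
      simpa [← mul_sub, abs_mul, abs_of_nonneg hr] using
        mul_le_mul_of_nonneg_left (one_le_abs_cast hb) hr
    · refine le_trans ?_ (Complex.abs_re_le_norm _)
      simpa [← mul_sub, abs_mul, abs_of_nonneg hr] using
        mul_le_mul_of_nonneg_left (one_le_abs_cast ha) hr
  exact hcoord.trans (PiLp.norm_apply_le (ν - ν') j)

lemma pow_natCeil_div_le_rpow {D r d : ℝ} (hD : 1 ≤ D) (hr : 0 < r) (hd : r ≤ d) :
    D ^ ⌈d / r⌉₊ ≤ (D ^ (2 / r)) ^ d := by
  have hdr : 1 ≤ d / r := (one_le_div hr).2 hd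
  have hceil : (⌈d / r⌉₊ : ℝ) ≤ 2 / r * d := by
    have := Nat.ceil_lt_add_one (by linarith : 0 ≤ d / r)
    rw [show 2 / r * d = 2 * (d / r) by ring]
    linarith
  rw [← Real.rpow_mul (by linarith), ← Real.rpow_natCast]
  exact Real.rpow_le_rpow_of_exponent_le hD hceil

theorem lattice_comparison_of_Apr_general (n : ℕ) (p r : ℝ) (hp : 1 < p)
    (hr : 0 < r) (w : En n → ℝ) (hw : IsWeight n w) (hApr : MemApr n p (3 * r) w) :
    ∃ C : ℝ, 1 ≤ C ∧ ∀ ν ν' : En n, IsLatticePoint n r ν → IsLatticePoint n r ν' →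
      (∫⁻ u in cube n r ν, ENNReal.ofReal (w u))
        ≤ ENNReal.ofReal (C ^ (‖ν - ν'‖ : ℝ)) *
            ∫⁻ u in cube n r ν', ENNReal.ofReal (w u) := by
  obtain ⟨D, hD1, hD⟩ := hApr.exists_lintegral_cube_three_mul_le hp hr hw.1 hw.2.1
  have hstep : ∀ z z' : En n, dist z z' ≤ r →
      ∫⁻ u in cube n r z, ENNReal.ofReal (w u) ≤
        ENNReal.ofReal D * ∫⁻ u in cube n r z', ENNReal.ofReal (w u) := fun z z' h =>
    (lintegral_mono_set (cube_subset_cube_three_mul (by rwa [← dist_eq_norm]))).trans (hD z')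
  refine ⟨D ^ (2 / r), Real.one_le_rpow hD1 (by positivity), fun ν ν' hν hν' => ?_⟩
  rcases eq_or_ne ν ν' with rfl | hne
  · simp
  calc ∫⁻ u in cube n r ν, ENNReal.ofReal (w u)
      ≤ ENNReal.ofReal D ^ ⌈‖ν - ν'‖ / r⌉₊ * ∫⁻ u in cube n r ν', ENNReal.ofReal (w u) :=
        le_pow_mul_of_forall_dist_le hstep _ <| by
          rw [dist_eq_norm, ← div_le_iff₀ hr]
          exact Nat.le_ceil _
    _ ≤ _ := by
        rw [← ENNReal.ofReal_pow (by linarith)]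
        gcongr
        exact pow_natCeil_div_le_rpow hD1 hr (hν.le_norm_sub hr.le hν' hne)

/-- if `w ∈ A_{p,3r}` then `w(Q_r(ν)) ≤ C^{|ν-ν'|} w(Q_r(ν'))`
for all lattice points `ν, ν' ∈ rℤ^{2n}`. -/
theorem lattice_comparison_of_Apr (n : ℕ) (hn : 1 ≤ n) (p r : ℝ) (hp : 1 < p)
    (hr : 0 < r) (w : En n → ℝ) (hw : IsWeight n w) (hApr : MemApr n p (3 * r) w) :
    ∃ C : ℝ, 1 ≤ C ∧ ∀ ν ν' : En n, IsLatticePoint n r ν → IsLatticePoint n r ν' →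
      (∫⁻ u in cube n r ν, ENNReal.ofReal (w u))
        ≤ ENNReal.ofReal (C ^ (‖ν - ν'‖ : ℝ)) *
            ∫⁻ u in cube n r ν', ENNReal.ofReal (w u) :=
  lattice_comparison_of_Apr_general n p r hp hr w hw hApr

end
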